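/- Let 𝒴 ⊂ ℝ be a finite set, let 𝒜, 𝒢₁, 𝒢₂, ℬ₂ be finite types, let p be a strictly positive probability mass function on 𝒴 × 𝒜 × 𝒢₁ × 𝒢₂ × ℬ₂, and fix a ∈ 𝒜. If G₂ ⊥ (A, G₁) | B₂ under p, then for all (y, a′, g₁, g₂, b₂): ψ_a^{G₁,B₂}(y,a′,g₁,b₂) − ψ_a^{G₁,(G₂,B₂)}(y,a′,g₁,g₂,b₂) = 1{a′=a} · ( p(g₁)·p(b₂) / p(a,g₁,b₂) ) · ( m₂(g₁,g₂,b₂) − m₁(g₁,b₂) ) + ∑_{g₁′} p(g₁′) · ( m₁(g₁′,b₂) − m₂(g₁′,g₂,b₂) ), where m₁(g₁,b₂) := ∑_y y·p(y | a,g₁,b₂) and m₂(g₁,g₂,b₂) := ∑_y y·p(y | a,g₁,g₂,b₂). -/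

import Mathlib

/-! Under `G₂ ⊥ (A, G₁) | B₂` the joint law factors as
`p(a, g₁, g₂, b₂) p(b₂) = p(g₂, b₂) p(a, g₁, b₂)`. Hence the inverse-probability weights
`p(g₁) p(g₂, b₂) / p(a, g₁, g₂, b₂)` and `p(g₁) p(b₂) / p(a, g₁, b₂)` of the two influence
functions coincide, and averaging `m₂(g₁, ·, b₂)` against `p(·, b₂)` gives `p(b₂) m₁(g₁, b₂)`.
Consequently the two target parameters agree, and the two influence functions differ only in
their weighted residual terms and their sums over `g₁'`. -/

open Finset

noncomputable section

variable {Y : Finset ℝ} {A G₁ G₂ B₂ : Type}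
variable [Fintype A] [Fintype G₁] [Fintype G₂] [Fintype B₂] [DecidableEq A]

/-- Marginal `p(g₁)`. -/
def pG1 (p : Y × A × G₁ × G₂ × B₂ → ℝ) (g₁ : G₁) : ℝ :=
  ∑ y : Y, ∑ a : A, ∑ g₂ : G₂, ∑ b₂ : B₂, p (y, a, g₁, g₂, b₂)

/-- Marginal `p(g₂)`. -/
def pG2 (p : Y × A × G₁ × G₂ × B₂ → ℝ) (g₂ : G₂) : ℝ :=
  ∑ y : Y, ∑ a : A, ∑ g₁ : G₁, ∑ b₂ : B₂, p (y, a, g₁, g₂, b₂)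

/-- Marginal `p(b₂)`. -/
def pB2 (p : Y × A × G₁ × G₂ × B₂ → ℝ) (b₂ : B₂) : ℝ :=
  ∑ y : Y, ∑ a : A, ∑ g₁ : G₁, ∑ g₂ : G₂, p (y, a, g₁, g₂, b₂)

/-- Marginal `p(g₂, b₂)`. -/
def pG2B2 (p : Y × A × G₁ × G₂ × B₂ → ℝ) (g₂ : G₂) (b₂ : B₂) : ℝ :=
  ∑ y : Y, ∑ a : A, ∑ g₁ : G₁, p (y, a, g₁, g₂, b₂)

/-- Marginal `p(a, g₁, b₂)`. -/
def pAG1B2 (p : Y × A × G₁ × G₂ × B₂ → ℝ) (a : A) (g₁ : G₁) (b₂ : B₂) : ℝ :=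
  ∑ y : Y, ∑ g₂ : G₂, p (y, a, g₁, g₂, b₂)

/-- Marginal `p(a, g₁, g₂, b₂)`. -/
def pAG1G2B2 (p : Y × A × G₁ × G₂ × B₂ → ℝ) (a : A) (g₁ : G₁) (g₂ : G₂) (b₂ : B₂) : ℝ :=
  ∑ y : Y, p (y, a, g₁, g₂, b₂)

/-- Marginal `p(a, g₁, g₂)`. -/
def pAG1G2 (p : Y × A × G₁ × G₂ × B₂ → ℝ) (a : A) (g₁ : G₁) (g₂ : G₂) : ℝ :=
  ∑ y : Y, ∑ b₂ : B₂, p (y, a, g₁, g₂, b₂)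

/-- Outcome regression `m₁(g₁,b₂) = ∑_y y·p(y | a, g₁, b₂)` for the
adjustment set `(G₁, B₂)`. -/
def m1 (p : Y × A × G₁ × G₂ × B₂ → ℝ) (a : A) (g₁ : G₁) (b₂ : B₂) : ℝ :=
  ∑ y : Y, (y : ℝ) * ((∑ g₂ : G₂, p (y, a, g₁, g₂, b₂)) / pAG1B2 p a g₁ b₂)

/-- Outcome regression `m₂(g₁,g₂,b₂) = ∑_y y·p(y | a, g₁, g₂, b₂)` for the
adjustment set `(G₁, (G₂, B₂))`. -/
def m2 (p : Y × A × G₁ × G₂ × B₂ → ℝ) (a : A) (g₁ : G₁) (g₂ : G₂) (b₂ : B₂) : ℝ :=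
  ∑ y : Y, (y : ℝ) * (p (y, a, g₁, g₂, b₂) / pAG1G2B2 p a g₁ g₂ b₂)

/-- Outcome regression `m₃(g₁,g₂) = ∑_y y·p(y | a, g₁, g₂)` for the
adjustment set `(G₁, G₂)`. -/
def m3 (p : Y × A × G₁ × G₂ × B₂ → ℝ) (a : A) (g₁ : G₁) (g₂ : G₂) : ℝ :=
  ∑ y : Y, (y : ℝ) * ((∑ b₂ : B₂, p (y, a, g₁, g₂, b₂)) / pAG1G2 p a g₁ g₂)

/-- Target parameter for the adjustment set `(G₁, B₂)`. -/
def T1 (p : Y × A × G₁ × G₂ × B₂ → ℝ) (a : A) : ℝ :=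
  ∑ g₁ : G₁, pG1 p g₁ * ∑ b₂ : B₂, pB2 p b₂ * m1 p a g₁ b₂

/-- Target parameter for the adjustment set `(G₁, (G₂, B₂))`. -/
def T2 (p : Y × A × G₁ × G₂ × B₂ → ℝ) (a : A) : ℝ :=
  ∑ g₁ : G₁, pG1 p g₁ * ∑ g₂ : G₂, ∑ b₂ : B₂, pG2B2 p g₂ b₂ * m2 p a g₁ g₂ b₂

/-- Target parameter for the adjustment set `(G₁, G₂)`. -/
def T3 (p : Y × A × G₁ × G₂ × B₂ → ℝ) (a : A) : ℝ :=
  ∑ g₁ : G₁, pG1 p g₁ * ∑ g₂ : G₂, pG2 p g₂ * m3 p a g₁ g₂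

/-- Influence function `ψ_a^{G₁,B₂}` for the adjustment set `(G₁, B₂)`. -/
def psi1 (p : Y × A × G₁ × G₂ × B₂ → ℝ) (a : A)
    (y : Y) (a' : A) (g₁ : G₁) (b₂ : B₂) : ℝ :=
  (if a' = a then (1 : ℝ) else 0) * (pG1 p g₁ * pB2 p b₂ / pAG1B2 p a g₁ b₂) *
      ((y : ℝ) - m1 p a g₁ b₂)
    + (∑ b₂' : B₂, pB2 p b₂' * m1 p a g₁ b₂')
    + (∑ g₁' : G₁, pG1 p g₁' * m1 p a g₁' b₂)
    - 2 * T1 p a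

/-- Influence function `ψ_a^{G₁,(G₂,B₂)}` for the adjustment set `(G₁, (G₂, B₂))`. -/
def psi2 (p : Y × A × G₁ × G₂ × B₂ → ℝ) (a : A)
    (y : Y) (a' : A) (g₁ : G₁) (g₂ : G₂) (b₂ : B₂) : ℝ :=
  (if a' = a then (1 : ℝ) else 0) *
      (pG1 p g₁ * pG2B2 p g₂ b₂ / pAG1G2B2 p a g₁ g₂ b₂) *
      ((y : ℝ) - m2 p a g₁ g₂ b₂)
    + (∑ g₂' : G₂, ∑ b₂' : B₂, pG2B2 p g₂' b₂' * m2 p a g₁ g₂' b₂')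
    + (∑ g₁' : G₁, pG1 p g₁' * m2 p a g₁' g₂ b₂)
    - 2 * T2 p a

/-- Influence function `ψ_a^{G₁,G₂}` for the adjustment set `(G₁, G₂)`. -/
def psi3 (p : Y × A × G₁ × G₂ × B₂ → ℝ) (a : A)
    (y : Y) (a' : A) (g₁ : G₁) (g₂ : G₂) : ℝ :=
  (if a' = a then (1 : ℝ) else 0) * (pG1 p g₁ * pG2 p g₂ / pAG1G2 p a g₁ g₂) *
      ((y : ℝ) - m3 p a g₁ g₂)
    + (∑ g₂' : G₂, pG2 p g₂' * m3 p a g₁ g₂')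
    + (∑ g₁' : G₁, pG1 p g₁' * m3 p a g₁' g₂)
    - 2 * T3 p a

/-- Conditional independence `G₂ ⊥ (A, G₁) | B₂` under `p`. -/
def CI_G2_AG1_B2 (p : Y × A × G₁ × G₂ × B₂ → ℝ) : Prop :=
  ∀ (g₂ : G₂) (a : A) (g₁ : G₁) (b₂ : B₂),
    (∑ y : Y, p (y, a, g₁, g₂, b₂)) / pB2 p b₂ =
      (pG2B2 p g₂ b₂ / pB2 p b₂) * (pAG1B2 p a g₁ b₂ / pB2 p b₂)

/-- Conditional independence `Y ⊥ B₂ | (A, G₁, G₂)` under `p`. -/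
def CI_Y_B2_AG1G2 (p : Y × A × G₁ × G₂ × B₂ → ℝ) : Prop :=
  ∀ (y : Y) (a : A) (g₁ : G₁) (g₂ : G₂) (b₂ : B₂),
    p (y, a, g₁, g₂, b₂) / pAG1G2 p a g₁ g₂ =
      ((∑ b₂' : B₂, p (y, a, g₁, g₂, b₂')) / pAG1G2 p a g₁ g₂) *
        (pAG1G2B2 p a g₁ g₂ b₂ / pAG1G2 p a g₁ g₂)

/-- Variance of a real function of the observation under `p`. -/
def VarP (p : Y × A × G₁ × G₂ × B₂ → ℝ) (f : Y × A × G₁ × G₂ × B₂ → ℝ) : ℝ :=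
  (∑ o : Y × A × G₁ × G₂ × B₂, p o * f o ^ 2) -
    (∑ o : Y × A × G₁ × G₂ × B₂, p o * f o) ^ 2

section

omit [DecidableEq A]

variable {p : Y × A × G₁ × G₂ × B₂ → ℝ}

section

omit [Fintype B₂]

section

omit [Fintype A] [Fintype G₁]

omit [Fintype G₂] in
theorem pAG1G2B2_pos [Nonempty Y] (hpos : ∀ o, 0 < p o) (a : A) (g₁ : G₁) (g₂ : G₂)
    (b₂ : B₂) : 0 < pAG1G2B2 p a g₁ g₂ b₂ :=
  Finset.sum_pos (fun _ _ => hpos _) univ_nonempty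

theorem pAG1B2_pos [Nonempty Y] [Nonempty G₂] (hpos : ∀ o, 0 < p o) (a : A) (g₁ : G₁)
    (b₂ : B₂) : 0 < pAG1B2 p a g₁ b₂ :=
  Finset.sum_pos (fun _ _ => Finset.sum_pos (fun _ _ => hpos _) univ_nonempty) univ_nonempty

omit [Fintype G₂] in
theorem m2_mul_pAG1G2B2 {a : A} {g₁ : G₁} {g₂ : G₂} {b₂ : B₂} (h : pAG1G2B2 p a g₁ g₂ b₂ ≠ 0) :
    m2 p a g₁ g₂ b₂ * pAG1G2B2 p a g₁ g₂ b₂ = ∑ y : Y, (y : ℝ) * p (y, a, g₁, g₂, b₂) := by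
  rw [m2, Finset.sum_mul]
  refine Finset.sum_congr rfl fun y _ => ?_
  field_simp

theorem m1_mul_pAG1B2 {a : A} {g₁ : G₁} {b₂ : B₂} (h : pAG1B2 p a g₁ b₂ ≠ 0) :
    m1 p a g₁ b₂ * pAG1B2 p a g₁ b₂ =
      ∑ g₂ : G₂, ∑ y : Y, (y : ℝ) * p (y, a, g₁, g₂, b₂) := by
  rw [m1, Finset.sum_mul, Finset.sum_comm]
  refine Finset.sum_congr rfl fun y _ => ?_
  rw [mul_assoc, div_mul_cancel₀ _ h, Finset.mul_sum]

end

theorem pB2_pos [Nonempty Y] [Nonempty A] [Nonempty G₁] [Nonempty G₂]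
    (hpos : ∀ o, 0 < p o) (b₂ : B₂) : 0 < pB2 p b₂ :=
  Finset.sum_pos (fun _ _ => Finset.sum_pos (fun _ _ => Finset.sum_pos
    (fun _ _ => Finset.sum_pos (fun _ _ => hpos _) univ_nonempty) univ_nonempty)
    univ_nonempty) univ_nonempty

theorem CI_G2_AG1_B2.pAG1G2B2_mul_pB2 (hCI : CI_G2_AG1_B2 p) {b₂ : B₂}
    (hb₂ : pB2 p b₂ ≠ 0) (a : A) (g₁ : G₁) (g₂ : G₂) :
    pAG1G2B2 p a g₁ g₂ b₂ * pB2 p b₂ = pG2B2 p g₂ b₂ * pAG1B2 p a g₁ b₂ := by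
  have h := hCI g₂ a g₁ b₂
  field_simp at h
  exact h

variable [Nonempty Y] [Nonempty A] [Nonempty G₁] [Nonempty G₂]

theorem pG2B2_div_pAG1G2B2 (hpos : ∀ o, 0 < p o) (hCI : CI_G2_AG1_B2 p) (a : A) (g₁ : G₁)
    (g₂ : G₂) (b₂ : B₂) :
    pG2B2 p g₂ b₂ / pAG1G2B2 p a g₁ g₂ b₂ = pB2 p b₂ / pAG1B2 p a g₁ b₂ := by
  rw [div_eq_div_iff (pAG1G2B2_pos hpos a g₁ g₂ b₂).ne' (pAG1B2_pos hpos a g₁ b₂).ne',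
    mul_comm (pB2 p b₂)]
  exact (hCI.pAG1G2B2_mul_pB2 (pB2_pos hpos b₂).ne' a g₁ g₂).symm

theorem sum_pG2B2_mul_m2 (hpos : ∀ o, 0 < p o) (hCI : CI_G2_AG1_B2 p) (a : A) (g₁ : G₁)
    (b₂ : B₂) :
    ∑ g₂ : G₂, pG2B2 p g₂ b₂ * m2 p a g₁ g₂ b₂ = pB2 p b₂ * m1 p a g₁ b₂ := by
  have hA := (pAG1B2_pos hpos a g₁ b₂).ne'
  apply mul_left_cancel₀ hA
  calc pAG1B2 p a g₁ b₂ * ∑ g₂ : G₂, pG2B2 p g₂ b₂ * m2 p a g₁ g₂ b₂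
      = ∑ g₂ : G₂, pB2 p b₂ * (m2 p a g₁ g₂ b₂ * pAG1G2B2 p a g₁ g₂ b₂) := by
        rw [Finset.mul_sum]
        refine Finset.sum_congr rfl fun g₂ _ => ?_
        linear_combination (-m2 p a g₁ g₂ b₂) *
          hCI.pAG1G2B2_mul_pB2 (pB2_pos hpos b₂).ne' a g₁ g₂
    _ = pAG1B2 p a g₁ b₂ * (pB2 p b₂ * m1 p a g₁ b₂) := by
        simp only [m2_mul_pAG1G2B2 (pAG1G2B2_pos hpos a g₁ _ b₂).ne', ← Finset.mul_sum,
          ← m1_mul_pAG1B2 hA]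
        ring

end

variable [Nonempty Y] [Nonempty A] [Nonempty G₁] [Nonempty G₂]

theorem sum_sum_pG2B2_mul_m2 (hpos : ∀ o, 0 < p o) (hCI : CI_G2_AG1_B2 p) (a : A)
    (g₁ : G₁) :
    ∑ g₂ : G₂, ∑ b₂ : B₂, pG2B2 p g₂ b₂ * m2 p a g₁ g₂ b₂ =
      ∑ b₂ : B₂, pB2 p b₂ * m1 p a g₁ b₂ := by
  rw [Finset.sum_comm]
  exact Finset.sum_congr rfl fun b₂ _ => sum_pG2B2_mul_m2 hpos hCI a g₁ b₂

theorem T2_eq_T1 (hpos : ∀ o, 0 < p o) (hCI : CI_G2_AG1_B2 p) (a : A) : T2 p a = T1 p a :=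
  Finset.sum_congr rfl fun g₁ _ => by rw [sum_sum_pG2B2_mul_m2 hpos hCI a g₁]

end

theorem psi_difference_formula_general
    (p : Y × A × G₁ × G₂ × B₂ → ℝ)
    (hpos : ∀ o, 0 < p o) (a : A)
    (hCI : CI_G2_AG1_B2 p) :
    ∀ (y : Y) (a' : A) (g₁ : G₁) (g₂ : G₂) (b₂ : B₂),
      psi1 p a y a' g₁ b₂ - psi2 p a y a' g₁ g₂ b₂ =
        (if a' = a then (1 : ℝ) else 0) *
            (pG1 p g₁ * pB2 p b₂ / pAG1B2 p a g₁ b₂) *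
            (m2 p a g₁ g₂ b₂ - m1 p a g₁ b₂)
          + ∑ g₁' : G₁, pG1 p g₁' * (m1 p a g₁' b₂ - m2 p a g₁' g₂ b₂) := by
  intro y a' g₁ g₂ b₂
  have : Nonempty Y := ⟨y⟩
  have : Nonempty G₁ := ⟨g₁⟩
  have : Nonempty G₂ := ⟨g₂⟩
  have : Nonempty A := ⟨a⟩
  rw [psi1, psi2, sum_sum_pG2B2_mul_m2 hpos hCI, T2_eq_T1 hpos hCI,
    mul_div_assoc (pG1 p g₁) (pG2B2 p g₂ b₂), pG2B2_div_pAG1G2B2 hpos hCI]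
  simp only [mul_sub, Finset.sum_sub_distrib]
  ring

/-- Simplified formula for the difference of the two influence functions
in the proof of Lemma 4.1, under `G₂ ⊥ (A, G₁) | B₂`. -/
theorem psi_difference_formula
    (p : Y × A × G₁ × G₂ × B₂ → ℝ)
    (hpos : ∀ o, 0 < p o) (hsum : ∑ o, p o = 1) (a : A)
    (hCI : CI_G2_AG1_B2 p) :
    ∀ (y : Y) (a' : A) (g₁ : G₁) (g₂ : G₂) (b₂ : B₂),
      psi1 p a y a' g₁ b₂ - psi2 p a y a' g₁ g₂ b₂ =
        (if a' = a then (1 : ℝ) else 0) *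
            (pG1 p g₁ * pB2 p b₂ / pAG1B2 p a g₁ b₂) *
            (m2 p a g₁ g₂ b₂ - m1 p a g₁ b₂)
          + ∑ g₁' : G₁, pG1 p g₁' * (m1 p a g₁' b₂ - m2 p a g₁' g₂ b₂) :=
  psi_difference_formula_general p hpos a hCI

end
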